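/- arXiv:math/0611320 — 2 statements merged into one kernel-verified Lean document; each statement's English description precedes it below -/
import Mathlib

section
/- Let D be a group with a bi-invariant partial order induced by a normal cone, with set of dominants C⁺, and assume γ(f,g) > 0 for all f, g ∈ C⁺. Then the function K(f,g) = max{log γ(f,g), log γ(g,f)} on C⁺ × C⁺ is nonnegative, symmetric, vanishes on the diagonal, and satisfies the triangle inequality. -/
open Filter Real Topology

/-!
Write `a ≥ b` for `a * b⁻¹ ∈ C`. Transitivity of `≥` gives `f ^ γ(f,g)(m) ≥ g ^ m ≥ h ^ n` for
`m = γ(g,h)(n)`, so `γ(f,h)(n) ≤ γ(f,g)(γ(g,h)(n))`; dividing by `n` and letting `n → ∞` yields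
`γ(f,h) ≤ γ(f,g) γ(g,h)`. Pointedness of the cone makes every `f ≠ 1` in it of infinite order,
whence `γ(f,f)(n) = n` and `γ(f,f) = 1`. In logarithms these are the axioms of a (non-symmetric)
pseudometric, and `K` is its symmetrisation by `max`.
-/

theorem tendsto_atTop_of_tendsto_natCast_div {m : ℕ → ℕ} {β : ℝ}
    (hm : Tendsto (fun n : ℕ => (m n : ℝ) / n) atTop (𝓝 β)) (hβ : 0 < β) :
    Tendsto m atTop atTop := by
  rw [← tendsto_natCast_atTop_iff (R := ℝ)]
  have hlin : ∀ᶠ n : ℕ in atTop, β / 2 * n ≤ (m n : ℝ) := by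
    filter_upwards [hm.eventually_const_lt (half_lt_self hβ), eventually_ge_atTop 1]
      with n hn hn1
    rw [lt_div_iff₀ (by exact_mod_cast hn1)] at hn
    exact hn.le
  exact tendsto_atTop_mono' _ hlin
    ((tendsto_natCast_atTop_atTop (R := ℝ)).const_mul_atTop (half_pos hβ))

theorem le_mul_of_le_comp_of_tendsto_div {a c : ℕ → ℝ} {m : ℕ → ℕ} {α β γ : ℝ}
    (ha : Tendsto (fun n : ℕ => a n / n) atTop (𝓝 α))
    (hm : Tendsto (fun n : ℕ => (m n : ℝ) / n) atTop (𝓝 β)) (hβ : 0 < β)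
    (hc : Tendsto (fun n : ℕ => c n / n) atTop (𝓝 γ))
    (hle : ∀ᶠ n in atTop, c n ≤ a (m n)) : γ ≤ α * β := by
  have hm_top := tendsto_atTop_of_tendsto_natCast_div hm hβ
  have hcomp : Tendsto (fun n : ℕ => a (m n) / n) atTop (𝓝 (α * β)) := by
    refine ((ha.comp hm_top).mul hm).congr' ?_
    filter_upwards [hm_top.eventually_ge_atTop 1] with n hn
    have : (m n : ℝ) ≠ 0 := by positivity
    simp only [Function.comp_apply]
    field_simp
  refine le_of_tendsto_of_tendsto hc hcomp ?_
  filter_upwards [hle] with n hn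
  exact div_le_div_of_nonneg_right hn n.cast_nonneg

namespace Submonoid

variable {D : Type*} [Group D] {S : Submonoid D}

theorem zpow_mem_of_nonneg {f : D} (hf : f ∈ S) {p : ℤ} (hp : 0 ≤ p) : f ^ p ∈ S := by
  lift p to ℕ using hp
  rw [zpow_natCast]
  exact pow_mem hf p

theorem mul_inv_mem_trans {a b c : D} (hab : a * b⁻¹ ∈ S) (hbc : b * c⁻¹ ∈ S) :
    a * c⁻¹ ∈ S := by
  simpa [mul_assoc] using mul_mem hab hbc

theorem eq_zero_of_zpow_eq_one (hpointed : ∀ a ∈ S, a⁻¹ ∈ S → a = 1) {f : D} (hf : f ∈ S)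
    (hf1 : f ≠ 1) {k : ℤ} (hk : f ^ k = 1) : k = 0 := by
  by_contra hk0
  have hfk : f ^ |k| = 1 := by
    rcases abs_choice k with h | h <;> simp [h, hk]
  have hf_inv : f⁻¹ = f ^ (|k| - 1) := by rw [zpow_sub, hfk, zpow_one, one_mul]
  refine hf1 (hpointed f hf ?_)
  rw [hf_inv]
  exact zpow_mem_of_nonneg hf (by have := abs_pos.2 hk0; omega)

theorem isLeast_zpow_mul_inv_pow_self (hpointed : ∀ a ∈ S, a⁻¹ ∈ S → a = 1) {f : D}
    (hf : f ∈ S) (hf1 : f ≠ 1) (n : ℕ) :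
    IsLeast {p : ℤ | f ^ p * (f ^ n)⁻¹ ∈ S} n := by
  refine ⟨by simp [one_mem], fun p hp => ?_⟩
  by_contra! hpn
  have hsub : f ^ (p - n) ∈ S := by rwa [zpow_sub, zpow_natCast]
  have hsub_inv : (f ^ (p - n))⁻¹ ∈ S := by
    rw [← zpow_neg]
    exact zpow_mem_of_nonneg hf (by omega)
  have := eq_zero_of_zpow_eq_one hpointed hf hf1 (hpointed _ hsub hsub_inv)
  omega

theorem tendsto_div_of_isLeast_zpow_self (hpointed : ∀ a ∈ S, a⁻¹ ∈ S → a = 1) {f : D}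
    (hf : f ∈ S) (hf1 : f ≠ 1) {s : ℕ → ℤ}
    (hs : ∀ n : ℕ, IsLeast {p : ℤ | f ^ p * (f ^ n)⁻¹ ∈ S} (s n)) :
    Tendsto (fun n : ℕ => (s n : ℝ) / n) atTop (𝓝 1) := by
  refine tendsto_const_nhds.congr' ?_
  filter_upwards [eventually_ge_atTop 1] with n hn
  rw [(hs n).unique (isLeast_zpow_mul_inv_pow_self hpointed hf hf1 n), Int.cast_natCast,
    div_self (by positivity)]

theorem le_mul_of_isLeast_zpow_of_tendsto {f g h : D} {sfg sgh sfh : ℕ → ℤ} {γfg γgh γfh : ℝ}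
    (hfg : ∀ n : ℕ, f ^ sfg n * (g ^ n)⁻¹ ∈ S) (hgh : ∀ n : ℕ, g ^ sgh n * (h ^ n)⁻¹ ∈ S)
    (hfh : ∀ n : ℕ, IsLeast {p : ℤ | f ^ p * (h ^ n)⁻¹ ∈ S} (sfh n))
    (hlim_fg : Tendsto (fun n : ℕ => (sfg n : ℝ) / n) atTop (𝓝 γfg))
    (hlim_gh : Tendsto (fun n : ℕ => (sgh n : ℝ) / n) atTop (𝓝 γgh))
    (hlim_fh : Tendsto (fun n : ℕ => (sfh n : ℝ) / n) atTop (𝓝 γfh)) (hγgh : 0 < γgh) :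
    γfh ≤ γfg * γgh := by
  have hgh_nonneg : ∀ᶠ n in atTop, 0 ≤ sgh n := by
    filter_upwards [hlim_gh.eventually_const_lt hγgh, eventually_ge_atTop 1] with n hn hn1
    have : (0 : ℝ) < sgh n := (div_pos_iff_of_pos_right (by positivity)).1 hn
    exact_mod_cast this.le
  have hcast : ∀ᶠ n in atTop, ((sgh n).toNat : ℤ) = sgh n := by
    filter_upwards [hgh_nonneg] with n hn
    exact Int.toNat_of_nonneg hn
  refine le_mul_of_le_comp_of_tendsto_div (m := fun n => (sgh n).toNat)
    (a := fun n => (sfg n : ℝ)) hlim_fg ?_ hγgh hlim_fh ?_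
  · refine hlim_gh.congr' ?_
    filter_upwards [hcast] with n hn
    congr 1
    exact_mod_cast hn.symm
  · filter_upwards [hcast] with n hn
    have hgm : g ^ (sgh n).toNat * (h ^ n)⁻¹ ∈ S := by
      rw [← zpow_natCast, hn]
      exact hgh n
    exact_mod_cast (hfh n).2 (mul_inv_mem_trans (hfg _) hgm)

end Submonoid

theorem K_is_pseudometric_general {D : Type*} [Group D] (C : Set D)
    (hmul : ∀ a b, a ∈ C → b ∈ C → a * b ∈ C)
    (hone : (1 : D) ∈ C)
    (hanti : ∀ a b : D, a * b⁻¹ ∈ C → b * a⁻¹ ∈ C → a = b)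
    (Cplus : Set D)
    (hCplus : ∀ f, f ∈ Cplus ↔ f ∈ C ∧ f ≠ 1 ∧ ∀ x : D, ∃ n : ℕ, f ^ n * x⁻¹ ∈ C)
    (γseq : D → D → ℕ → ℤ) (gam : D → D → ℝ)
    (hγ : ∀ f ∈ Cplus, ∀ g ∈ Cplus, ∀ n : ℕ,
      IsLeast {p : ℤ | f ^ p * (g ^ n)⁻¹ ∈ C} (γseq f g n))
    (hlim : ∀ f ∈ Cplus, ∀ g ∈ Cplus,
      Tendsto (fun n : ℕ => (γseq f g n : ℝ) / n) atTop (nhds (gam f g)))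
    (hpos : ∀ f ∈ Cplus, ∀ g ∈ Cplus, 0 < gam f g) :
    let K : D → D → ℝ := fun f g => max (log (gam f g)) (log (gam g f))
    (∀ f ∈ Cplus, ∀ g ∈ Cplus, 0 ≤ K f g) ∧
    (∀ f ∈ Cplus, ∀ g ∈ Cplus, K f g = K g f) ∧
    (∀ f ∈ Cplus, K f f = 0) ∧
    (∀ f ∈ Cplus, ∀ g ∈ Cplus, ∀ h ∈ Cplus, K f h ≤ K f g + K g h) := by
  intro K
  let S : Submonoid D := { carrier := C, mul_mem' := hmul _ _, one_mem' := hone }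
  have hpointed : ∀ a ∈ S, a⁻¹ ∈ S → a = 1 := fun a ha ha' =>
    hanti a 1 (by rwa [inv_one, mul_one]) (by rwa [one_mul])
  have hgam_self : ∀ f ∈ Cplus, gam f f = 1 := fun f hf =>
    tendsto_nhds_unique (hlim f hf f hf) <|
      Submonoid.tendsto_div_of_isLeast_zpow_self hpointed ((hCplus f).1 hf).1
        ((hCplus f).1 hf).2.1 (hγ f hf f hf)
  have hlog_self : ∀ f ∈ Cplus, log (gam f f) = 0 := fun f hf => by
    rw [hgam_self f hf, log_one]
  have hlog_tri : ∀ f ∈ Cplus, ∀ g ∈ Cplus, ∀ h ∈ Cplus,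
      log (gam f h) ≤ log (gam f g) + log (gam g h) := fun f hf g hg h hh => by
    rw [← log_mul (hpos f hf g hg).ne' (hpos g hg h hh).ne']
    refine log_le_log (hpos f hf h hh) <| Submonoid.le_mul_of_isLeast_zpow_of_tendsto (S := S)
      (fun n => (hγ f hf g hg n).1) (fun n => (hγ g hg h hh n).1) (hγ f hf h hh)
      (hlim f hf g hg) (hlim g hg h hh) (hlim f hf h hh) (hpos g hg h hh)
  refine ⟨fun f hf g hg => ?_, fun f _ g _ => max_comm _ _,
    fun f hf => by simp only [K, hlog_self f hf, max_self], fun f hf g hg h hh => ?_⟩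
  · have hsum := hlog_tri f hf g hg f hf
    rw [hlog_self f hf] at hsum
    linarith [le_max_left (log (gam f g)) (log (gam g f)),
      le_max_right (log (gam f g)) (log (gam g f))]
  · refine max_le ((hlog_tri f hf g hg h hh).trans (add_le_add (le_max_left _ _)
      (le_max_left _ _))) ((hlog_tri h hh g hg f hf).trans ?_)
    rw [add_comm]
    exact add_le_add (le_max_right _ _) (le_max_right _ _)

/-- In a group `D` with a bi-invariant partial order induced by a normal
cone, with set of dominants `C⁺`, and relative growth `gam` (assumed positive on
dominants), the function `K(f,g) = max{log γ(f,g), log γ(g,f)}` is nonnegative,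
symmetric, vanishes on the diagonal, and satisfies the triangle inequality. -/
theorem K_is_pseudometric {D : Type*} [Group D] (C : Set D)
    (hmul : ∀ a b, a ∈ C → b ∈ C → a * b ∈ C)
    (hconj : ∀ a b, a ∈ C → b * a * b⁻¹ ∈ C)
    (hone : (1 : D) ∈ C)
    (hanti : ∀ a b : D, a * b⁻¹ ∈ C → b * a⁻¹ ∈ C → a = b)
    (Cplus : Set D)
    (hCplus : ∀ f, f ∈ Cplus ↔ f ∈ C ∧ f ≠ 1 ∧ ∀ x : D, ∃ n : ℕ, f ^ n * x⁻¹ ∈ C)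
    (γseq : D → D → ℕ → ℤ) (gam : D → D → ℝ)
    (hγ : ∀ f ∈ Cplus, ∀ g ∈ Cplus, ∀ n : ℕ,
      IsLeast {p : ℤ | f ^ p * (g ^ n)⁻¹ ∈ C} (γseq f g n))
    (hlim : ∀ f ∈ Cplus, ∀ g ∈ Cplus,
      Tendsto (fun n : ℕ => (γseq f g n : ℝ) / n) atTop (nhds (gam f g)))
    (hpos : ∀ f ∈ Cplus, ∀ g ∈ Cplus, 0 < gam f g) :
    let K : D → D → ℝ := fun f g => max (log (gam f g)) (log (gam g f))
    (∀ f ∈ Cplus, ∀ g ∈ Cplus, 0 ≤ K f g) ∧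
    (∀ f ∈ Cplus, ∀ g ∈ Cplus, K f g = K g f) ∧
    (∀ f ∈ Cplus, K f f = 0) ∧
    (∀ f ∈ Cplus, ∀ g ∈ Cplus, ∀ h ∈ Cplus, K f h ≤ K f g + K g h) :=
  K_is_pseudometric_general C hmul hone hanti Cplus hCplus γseq gam hγ hlim hpos
end

section
/- For any two dominants f, g in a group with a bi-invariant partial order induced by a normal cone, γ(f,g) · γ(g,f) ≥ 1. -/
/-!
Write `a ≥ b` for `a * b⁻¹ ∈ C`. If `g ^ (γgf n) ≥ f ^ n` and `f ^ (γfg m) ≥ g ^ m`, then taking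
`m = γgf n` gives `f ^ (γfg (γgf n)) ≥ f ^ n`, and since `f` is a nontrivial element of a pointed
cone this forces `γfg (γgf n) ≥ n`. Dominance of `f` makes `γgf n → ∞`, so
`γfg (γgf n) / n = (γfg (γgf n) / γgf n) · (γgf n / n) → A · B`, and the limit is at least `1`.
-/

open Filter Topology

section Cone

variable {D : Type*} [Group D] (S : Submonoid D)

theorem Submonoid.mul_inv_mem_trans_s5 {a b c : D} (hab : a * b⁻¹ ∈ S) (hbc : b * c⁻¹ ∈ S) :
    a * c⁻¹ ∈ S := by
  simpa [mul_assoc] using S.mul_mem hab hbc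

theorem Submonoid.zpow_mem_of_nonneg_s5 {a : D} (ha : a ∈ S) {k : ℤ} (hk : 0 ≤ k) : a ^ k ∈ S := by
  lift k to ℕ using hk
  simpa using S.pow_mem ha k

theorem Submonoid.zpow_mul_inv_zpow_mem {a : D} (ha : a ∈ S) {p q : ℤ} (hqp : q ≤ p) :
    a ^ p * (a ^ q)⁻¹ ∈ S := by
  rw [← zpow_sub]
  exact S.zpow_mem_of_nonneg_s5 ha (by omega)

variable {S} (hS : ∀ x ∈ S, x⁻¹ ∈ S → x = 1)
include hS

theorem Submonoid.nonneg_of_zpow_mem {a : D} (ha : a ∈ S) (ha1 : a ≠ 1) {k : ℤ}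
    (hk : a ^ k ∈ S) : 0 ≤ k := by
  by_contra! hneg
  -- `a⁻¹ = a ^ k * a ^ (-k - 1)` is a product of two cone elements.
  have hinv : a⁻¹ ∈ S := by
    have := S.mul_mem hk (S.zpow_mem_of_nonneg_s5 ha (k := -k - 1) (by omega))
    rwa [← zpow_add, show k + (-k - 1) = -1 by ring, zpow_neg_one] at this
  exact ha1 (hS a ha hinv)

theorem Submonoid.le_of_zpow_mul_inv_zpow_mem {a : D} (ha : a ∈ S) (ha1 : a ≠ 1) {p q : ℤ}
    (h : a ^ p * (a ^ q)⁻¹ ∈ S) : q ≤ p := by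
  rw [← zpow_sub] at h
  have := Submonoid.nonneg_of_zpow_mem hS ha ha1 h
  omega

end Cone

section Dominant

variable {D : Type*} [Group D] {S : Submonoid D} (hS : ∀ x ∈ S, x⁻¹ ∈ S → x = 1)
  {f g : D} {b : ℕ → ℤ} (hb : ∀ n : ℕ, g ^ b n * (f ^ n)⁻¹ ∈ S)
include hS hb

theorem nonneg_of_zpow_ge_pow (hf : f ∈ S) (hg : g ∈ S) (hg1 : g ≠ 1) (n : ℕ) : 0 ≤ b n := by
  refine Submonoid.nonneg_of_zpow_mem hS hg hg1 ?_
  simpa using S.mul_mem (hb n) (S.pow_mem hf n)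

theorem tendsto_atTop_of_zpow_ge_pow (hf : f ∈ S) (hf1 : f ≠ 1)
    (hfdom : ∀ x : D, ∃ n : ℕ, f ^ n * x⁻¹ ∈ S) (hg : g ∈ S) : Tendsto b atTop atTop := by
  refine tendsto_atTop.2 fun K => ?_
  obtain ⟨N, hN⟩ := hfdom (g ^ K)
  filter_upwards [eventually_gt_atTop N] with n hn
  by_contra! hlt
  -- Otherwise `f ^ N ≥ g ^ K ≥ g ^ (b n) ≥ f ^ n` with `n > N`.
  have hgK : g ^ K * (f ^ n)⁻¹ ∈ S :=
    S.mul_inv_mem_trans_s5 (S.zpow_mul_inv_zpow_mem hg hlt.le) (hb n)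
  have hfN : f ^ (N : ℤ) * (f ^ (n : ℤ))⁻¹ ∈ S := by
    simpa using S.mul_inv_mem_trans_s5 hN hgK
  have := Submonoid.le_of_zpow_mul_inv_zpow_mem hS hf hf1 hfN
  omega

end Dominant

theorem one_le_mul_of_le_comp {u : ℕ → ℝ} {m : ℕ → ℕ} {A B : ℝ} (hm : Tendsto m atTop atTop)
    (hle : ∀ n : ℕ, (n : ℝ) ≤ u (m n)) (hA : Tendsto (fun n => u n / n) atTop (𝓝 A))
    (hB : Tendsto (fun n => (m n : ℝ) / n) atTop (𝓝 B)) : 1 ≤ A * B := by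
  have hcomp : Tendsto (fun n => u (m n) / n) atTop (𝓝 (A * B)) := by
    refine ((hA.comp hm).mul hB).congr' ?_
    filter_upwards [hm.eventually_ge_atTop 1] with n hn
    have : (m n : ℝ) ≠ 0 := by positivity
    simp only [Function.comp_apply]
    field_simp
  refine ge_of_tendsto hcomp ?_
  filter_upwards [eventually_gt_atTop 0] with n hn
  rw [le_div_iff₀ (by positivity), one_mul]
  exact hle n

theorem relative_growth_product_ge_one_general {D : Type*} [Group D] (C : Set D)
    (hmul : ∀ a b, a ∈ C → b ∈ C → a * b ∈ C)
    (hone : (1 : D) ∈ C)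
    (hanti : ∀ a b : D, a * b⁻¹ ∈ C → b * a⁻¹ ∈ C → a = b)
    (f g : D)
    (hf : f ∈ C ∧ f ≠ 1 ∧ ∀ x : D, ∃ n : ℕ, f ^ n * x⁻¹ ∈ C)
    (hg : g ∈ C ∧ g ≠ 1 ∧ ∀ x : D, ∃ n : ℕ, g ^ n * x⁻¹ ∈ C)
    (γfg γgf : ℕ → ℤ)
    (hγfg : ∀ n : ℕ, IsLeast {p : ℤ | f ^ p * (g ^ n)⁻¹ ∈ C} (γfg n))
    (hγgf : ∀ n : ℕ, IsLeast {p : ℤ | g ^ p * (f ^ n)⁻¹ ∈ C} (γgf n))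
    (A B : ℝ)
    (hA : Tendsto (fun n : ℕ => (γfg n : ℝ) / n) atTop (nhds A))
    (hB : Tendsto (fun n : ℕ => (γgf n : ℝ) / n) atTop (nhds B)) :
    1 ≤ A * B := by
  obtain ⟨hfC, hf1, hfdom⟩ := hf
  obtain ⟨hgC, hg1, -⟩ := hg
  let S : Submonoid D := ⟨⟨C, hmul _ _⟩, hone⟩
  have hS : ∀ x ∈ S, x⁻¹ ∈ S → x = 1 := fun x hx hx' => hanti x 1 (by simpa) (by simpa)
  have hgf : ∀ n : ℕ, g ^ γgf n * (f ^ n)⁻¹ ∈ S := fun n => (hγgf n).1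
  have hm : ∀ n, ((γgf n).toNat : ℤ) = γgf n :=
    fun n => Int.toNat_of_nonneg (nonneg_of_zpow_ge_pow hS hgf hfC hgC hg1 n)
  have hmR : ∀ n, (γgf n : ℝ) = ((γgf n).toNat : ℝ) := fun n => by exact_mod_cast (hm n).symm
  refine one_le_mul_of_le_comp (u := fun n => (γfg n : ℝ)) (m := fun n => (γgf n).toNat)
    ?_ (fun n => ?_) hA (hB.congr fun n => by rw [hmR n])
  · rw [← tendsto_natCast_atTop_iff (R := ℤ)]
    simpa only [hm] using tendsto_atTop_of_zpow_ge_pow hS hgf hfC hf1 hfdom hgC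
  · have hfg : f ^ γfg (γgf n).toNat * (g ^ ((γgf n).toNat : ℤ))⁻¹ ∈ S := by
      rw [zpow_natCast]; exact (hγfg _).1
    have hgf' : g ^ ((γgf n).toNat : ℤ) * (f ^ (n : ℤ))⁻¹ ∈ S := by
      rw [hm n, zpow_natCast]; exact hgf n
    exact_mod_cast Submonoid.le_of_zpow_mul_inv_zpow_mem hS hfC hf1
      (S.mul_inv_mem_trans_s5 hfg hgf')

/-- For any two dominants `f, g` in a group with a bi-invariant partial
order induced by a normal cone, the relative growths satisfy `γ(f,g) · γ(g,f) ≥ 1`. -/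
theorem relative_growth_product_ge_one {D : Type*} [Group D] (C : Set D)
    (hmul : ∀ a b, a ∈ C → b ∈ C → a * b ∈ C)
    (hconj : ∀ a b, a ∈ C → b * a * b⁻¹ ∈ C)
    (hone : (1 : D) ∈ C)
    (hanti : ∀ a b : D, a * b⁻¹ ∈ C → b * a⁻¹ ∈ C → a = b)
    (f g : D)
    (hf : f ∈ C ∧ f ≠ 1 ∧ ∀ x : D, ∃ n : ℕ, f ^ n * x⁻¹ ∈ C)
    (hg : g ∈ C ∧ g ≠ 1 ∧ ∀ x : D, ∃ n : ℕ, g ^ n * x⁻¹ ∈ C)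
    (γfg γgf : ℕ → ℤ)
    (hγfg : ∀ n : ℕ, IsLeast {p : ℤ | f ^ p * (g ^ n)⁻¹ ∈ C} (γfg n))
    (hγgf : ∀ n : ℕ, IsLeast {p : ℤ | g ^ p * (f ^ n)⁻¹ ∈ C} (γgf n))
    (A B : ℝ)
    (hA : Tendsto (fun n : ℕ => (γfg n : ℝ) / n) atTop (nhds A))
    (hB : Tendsto (fun n : ℕ => (γgf n : ℝ) / n) atTop (nhds B)) :
    1 ≤ A * B :=
  relative_growth_product_ge_one_general C hmul hone hanti f g hf hg γfg γgf hγfg hγgf A B hA hB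
end
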